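/- Let w = v^ω be a periodic binary word over {1,2} with |v|₁ = |v|₂ = ℓ/2. The set P_w is 1-invariant if and only if for every position x ∈ [0,2ℓ]² \ P_w there exists p ∈ P_w with p ≤ x componentwise and x − p ∉ P_w − P_w. -/

import Mathlib

/-- `A` enumerates (for indices `m ≥ 1`, in increasing order) the positions
`i ≥ 1` where the infinite word `w` carries the letter `a`. -/
def EnumOcc (w : ℕ → ℕ) (a : ℕ) (A : ℕ → ℕ) : Prop :=
  (∀ m n, 1 ≤ m → m < n → A m < A n) ∧
  (∀ m, 1 ≤ m → 1 ≤ A m ∧ w (A m) = a) ∧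
  (∀ i, 1 ≤ i → w i = a → ∃ m, 1 ≤ m ∧ A m = i)

/-- The set of positions associated with a binary word. -/
def Pword (A B : ℕ → ℕ) : Set (ℕ × ℕ) :=
  {(0, 0)} ∪ {p | ∃ m, 1 ≤ m ∧ p = (A m, B m)} ∪ {p | ∃ m, 1 ≤ m ∧ p = (B m, A m)}

/-- The set of componentwise differences X − Y that stay in ℕ². -/
def DiffOf (X Y : Set (ℕ × ℕ)) : Set (ℕ × ℕ) :=
  {d | ∃ x ∈ X, ∃ y ∈ Y, y.1 ≤ x.1 ∧ y.2 ≤ x.2 ∧ d = (x.1 - y.1, x.2 - y.2)}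

/-- `P` is the set of P-positions of the two-pile game `G`. -/
def IsPPositions2 (G : ℕ × ℕ → Set (ℕ × ℕ)) (P : Set (ℕ × ℕ)) : Prop :=
  (∀ p ∈ P, ∀ m ∈ G p, (p.1 - m.1, p.2 - m.2) ∉ P) ∧
  (∀ q, q ∉ P → ∃ m ∈ G q, (q.1 - m.1, q.2 - m.2) ∈ P)

/-!
The move set `ℕ² \ (P_w - P_w)` is the largest one that never joins two points of `P_w`, so
`P_w` is 1-invariant exactly when every `x ∉ P_w` can reach `P_w` by a move outside
`P_w - P_w`. For a balanced word of period `ℓ` the `m`-th `1` and the `m`-th `2` lie in the same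
period block, so `P_w` stays within distance `ℓ` of the diagonal, meets every row and column
exactly once, and is invariant under translation by `(ℓ, ℓ)` away from the origin. A position at
distance at least `ℓ` from the diagonal therefore moves straight along its row (or column) to
the point of `P_w` there, while a position near the diagonal but outside `[0, 2ℓ]²` inherits a
legal move from `x - (ℓ, ℓ)`, because `P_w - P_w` is invariant under that translation too.
-/

def letterCount (w : ℕ → ℕ) (a N : ℕ) : ℕ := ((Finset.Icc 1 N).filter (fun i => w i = a)).card

section LetterCount

variable {w : ℕ → ℕ} {a : ℕ}

lemma letterCount_succ (N : ℕ) :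
    letterCount w a (N + 1) = letterCount w a N + if w (N + 1) = a then 1 else 0 := by
  rw [letterCount, ← Finset.insert_Icc_right_eq_Icc_add_one (by omega), Finset.filter_insert]
  split_ifs
  · exact Finset.card_insert_of_notMem (by simp)
  · rfl

lemma letterCount_mono {M N : ℕ} (h : M ≤ N) : letterCount w a M ≤ letterCount w a N :=
  Finset.card_le_card (Finset.filter_subset_filter _ (Finset.Icc_subset_Icc_right h))

lemma letterCount_add_period {ℓ : ℕ} (hper : ∀ i, 1 ≤ i → w (i + ℓ) = w i) (N : ℕ) :
    letterCount w a (N + ℓ) = letterCount w a N + letterCount w a ℓ := by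
  induction N with
  | zero => simp [letterCount]
  | succ N ih =>
    rw [show N + 1 + ℓ = N + ℓ + 1 by omega, letterCount_succ, ih, letterCount_succ,
      show N + ℓ + 1 = N + 1 + ℓ by omega, hper _ (by omega)]
    omega

end LetterCount

namespace EnumOcc

variable {w : ℕ → ℕ} {a : ℕ} {A : ℕ → ℕ}

lemma strictMonoOn (hA : EnumOcc w a A) : StrictMonoOn A (Set.Ici 1) :=
  fun m hm _ _ hmn => hA.1 m _ hm hmn

lemma le_letterCount (hA : EnumOcc w a A) {m N : ℕ} (hm : 1 ≤ m) (h : A m ≤ N) :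
    m ≤ letterCount w a N := by
  have := Finset.card_le_card_of_injOn A (s := Finset.Icc 1 m)
    (t := (Finset.Icc 1 N).filter (fun i => w i = a))
    (fun n hn => by
      simp only [Finset.coe_Icc, Set.mem_Icc] at hn
      simp only [Finset.coe_filter, Finset.mem_Icc, Set.mem_ofPred_eq]
      refine ⟨⟨(hA.2.1 n hn.1).1, ?_⟩, (hA.2.1 n hn.1).2⟩
      exact ((hA.strictMonoOn.le_iff_le hn.1 (Set.mem_Ici.2 hm)).2 hn.2).trans h)
    (hA.strictMonoOn.injOn.mono fun n hn => (Finset.mem_Icc.1 hn).1)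
  simpa [letterCount] using this

lemma letterCount_lt (hA : EnumOcc w a A) {m N : ℕ} (hm : 1 ≤ m) (h : N < A m) :
    letterCount w a N < m := by
  have hsub : (Finset.Icc 1 N).filter (fun i => w i = a) ⊆ (Finset.Ico 1 m).image A := by
    intro i hi
    simp only [Finset.mem_filter, Finset.mem_Icc] at hi
    obtain ⟨n, hn, rfl⟩ := hA.2.2 i hi.1.1 hi.2
    refine Finset.mem_image_of_mem A (Finset.mem_Ico.2 ⟨hn, ?_⟩)
    exact (hA.strictMonoOn.lt_iff_lt hn hm).1 (by omega)
  have := (Finset.card_le_card hsub).trans Finset.card_image_le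
  rw [Nat.card_Ico] at this
  unfold letterCount
  omega

lemma le_iff_le_letterCount (hA : EnumOcc w a A) {m N : ℕ} (hm : 1 ≤ m) :
    A m ≤ N ↔ m ≤ letterCount w a N :=
  ⟨hA.le_letterCount hm, fun h => not_lt.1 fun hN => (hA.letterCount_lt hm hN).not_ge h⟩

lemma add_period (hA : EnumOcc w a A) {ℓ : ℕ} (hper : ∀ i, 1 ≤ i → w (i + ℓ) = w i)
    {m : ℕ} (hm : 1 ≤ m) : A (m + letterCount w a ℓ) = A m + ℓ := by
  refine eq_of_forall_ge_iff fun N => ?_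
  rw [hA.le_iff_le_letterCount (by omega)]
  rcases le_or_gt ℓ N with h | h
  · obtain ⟨N, rfl⟩ := Nat.exists_eq_add_of_le' h
    rw [letterCount_add_period hper, Nat.add_le_add_iff_right, Nat.add_le_add_iff_right,
      hA.le_iff_le_letterCount hm]
  · have := letterCount_mono (w := w) (a := a) h.le
    omega

lemma one_le_letterCount_period (hA : EnumOcc w a A) {ℓ : ℕ}
    (hper : ∀ i, 1 ≤ i → w (i + ℓ) = w i) (hℓ : 1 ≤ ℓ) : 1 ≤ letterCount w a ℓ := by
  by_contra! h0
  have := hA.add_period hper le_rfl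
  rw [Nat.lt_one_iff.1 h0, Nat.add_zero] at this
  omega

lemma apply_ne {b : ℕ} {B : ℕ → ℕ} (hA : EnumOcc w a A) (hB : EnumOcc w b B) (hab : a ≠ b)
    {m n : ℕ} (hm : 1 ≤ m) (hn : 1 ≤ n) : A m ≠ B n := fun h =>
  hab ((hA.2.1 m hm).2.symm.trans (h ▸ (hB.2.1 n hn).2))

end EnumOcc

section BalancedPair

variable {w : ℕ → ℕ} {ℓ a b : ℕ} {A B : ℕ → ℕ}

lemma enum_lt_enum_add_period (hA : EnumOcc w a A) (hB : EnumOcc w b B)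
    (hper : ∀ i, 1 ≤ i → w (i + ℓ) = w i) (hℓ : 1 ≤ ℓ)
    (hcount : letterCount w a ℓ = letterCount w b ℓ) :
    ∀ m, 1 ≤ m → A m < B m + ℓ ∧ B m < A m + ℓ := by
  intro m
  induction m using Nat.strong_induction_on with
  | _ m ih =>
    intro hm
    by_cases hmk : m ≤ letterCount w a ℓ
    · have hAm := (hA.le_iff_le_letterCount hm).2 hmk
      have hBm := (hB.le_iff_le_letterCount hm).2 (hcount ▸ hmk)
      have := (hA.2.1 m hm).1
      have := (hB.2.1 m hm).1
      omega
    · have hk := hA.one_le_letterCount_period hper hℓ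
      obtain ⟨m, rfl⟩ := Nat.exists_eq_add_of_le' (by omega : letterCount w a ℓ ≤ m)
      have := ih m (by omega) (by omega)
      rw [hA.add_period hper (by omega), hcount, hB.add_period hper (by omega)]
      omega

lemma exists_enum_eq_add_period (hA : EnumOcc w a A) (hB : EnumOcc w b B) (hab : a ≠ b)
    (hper : ∀ i, 1 ≤ i → w (i + ℓ) = w i) (hcount : letterCount w a ℓ = letterCount w b ℓ)
    {m : ℕ} (hm : 1 ≤ m) (hAm : ℓ ≤ A m) (hBm : ℓ ≤ B m) :
    ∃ n, 1 ≤ n ∧ A m = A n + ℓ ∧ B m = B n + ℓ := by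
  have hmk : letterCount w a ℓ < m := by
    by_contra! hmk
    have := (hA.le_iff_le_letterCount hm).2 hmk
    have := (hB.le_iff_le_letterCount hm).2 (hcount ▸ hmk)
    exact hA.apply_ne hB hab hm hm (by omega)
  obtain ⟨n, rfl⟩ := Nat.exists_eq_add_of_le' hmk.le
  refine ⟨n, by omega, hA.add_period hper (by omega), ?_⟩
  rw [hcount]
  exact hB.add_period hper (by omega)

end BalancedPair

section PositionSet

variable {w : ℕ → ℕ} {ℓ : ℕ} {A B : ℕ → ℕ}

lemma zero_mem_pword : ((0, 0) : ℕ × ℕ) ∈ Pword A B := Or.inl (Or.inl rfl)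

lemma swap_mem_pword {p : ℕ × ℕ} (hp : p ∈ Pword A B) : p.swap ∈ Pword A B := by
  rcases hp with (rfl | ⟨m, hm, rfl⟩) | ⟨m, hm, rfl⟩
  · exact zero_mem_pword
  · exact Or.inr ⟨m, hm, rfl⟩
  · exact Or.inl (Or.inr ⟨m, hm, rfl⟩)

lemma injOn_snd_pword {a b : ℕ} (hA : EnumOcc w a A) (hB : EnumOcc w b B) (hab : a ≠ b) :
    Set.InjOn Prod.snd (Pword A B) := by
  rintro p hp q hq (h : p.2 = q.2)
  rcases hp with (rfl | ⟨m, hm, rfl⟩) | ⟨m, hm, rfl⟩ <;>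
    rcases hq with (rfl | ⟨n, hn, rfl⟩) | ⟨n, hn, rfl⟩ <;> dsimp only at h
  · rfl
  · exact absurd h.symm (Nat.one_le_iff_ne_zero.1 (hB.2.1 n hn).1)
  · exact absurd h.symm (Nat.one_le_iff_ne_zero.1 (hA.2.1 n hn).1)
  · exact absurd h (Nat.one_le_iff_ne_zero.1 (hB.2.1 m hm).1)
  · rw [hB.strictMonoOn.injOn hm hn h]
  · exact absurd h.symm (hA.apply_ne hB hab hn hm)
  · exact absurd h (Nat.one_le_iff_ne_zero.1 (hA.2.1 m hm).1)
  · exact absurd h (hA.apply_ne hB hab hm hn)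
  · rw [hA.strictMonoOn.injOn hm hn h]

lemma exists_mem_pword_snd_eq (hℓ : 1 ≤ ℓ) (hbin : ∀ i, 1 ≤ i → w i = 1 ∨ w i = 2)
    (hper : ∀ i, 1 ≤ i → w (i + ℓ) = w i) (hcount : letterCount w 1 ℓ = letterCount w 2 ℓ)
    (hA : EnumOcc w 1 A) (hB : EnumOcc w 2 B) (n : ℕ) :
    ∃ p ∈ Pword A B, p.2 = n ∧ p.1 < n + ℓ := by
  have hclose := enum_lt_enum_add_period hA hB hper hℓ hcount
  rcases Nat.eq_zero_or_pos n with rfl | hn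
  · exact ⟨(0, 0), zero_mem_pword, rfl, by simp only [zero_add]; exact hℓ⟩
  rcases hbin n hn with h | h
  · obtain ⟨m, hm, rfl⟩ := hA.2.2 n hn h
    exact ⟨(B m, A m), Or.inr ⟨m, hm, rfl⟩, rfl, (hclose m hm).2⟩
  · obtain ⟨m, hm, rfl⟩ := hB.2.2 n hn h
    exact ⟨(A m, B m), Or.inl (Or.inr ⟨m, hm, rfl⟩), rfl, (hclose m hm).1⟩

lemma add_period_mem_pword {a b : ℕ} (hper : ∀ i, 1 ≤ i → w (i + ℓ) = w i)
    (hcount : letterCount w a ℓ = letterCount w b ℓ) (hA : EnumOcc w a A) (hB : EnumOcc w b B)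
    {p : ℕ × ℕ} (hp : p ∈ Pword A B) (hp0 : p ≠ (0, 0)) : (p.1 + ℓ, p.2 + ℓ) ∈ Pword A B := by
  rcases hp with (rfl | ⟨m, hm, rfl⟩) | ⟨m, hm, rfl⟩
  · exact absurd rfl hp0
  all_goals
    have hA' := hA.add_period hper hm
    have hB' := hB.add_period hper hm
    rw [← hcount] at hB'
  · exact Or.inl (Or.inr ⟨m + letterCount w a ℓ, by omega, by rw [hA', hB']⟩)
  · exact Or.inr ⟨m + letterCount w a ℓ, by omega, by rw [hA', hB']⟩

lemma sub_period_mem_pword {a b : ℕ} (hab : a ≠ b) (hper : ∀ i, 1 ≤ i → w (i + ℓ) = w i)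
    (hcount : letterCount w a ℓ = letterCount w b ℓ) (hA : EnumOcc w a A) (hB : EnumOcc w b B)
    {p : ℕ × ℕ} (hp : p ∈ Pword A B) (h1 : ℓ ≤ p.1) (h2 : ℓ ≤ p.2) :
    (p.1 - ℓ, p.2 - ℓ) ∈ Pword A B := by
  rcases hp with (rfl | ⟨m, hm, rfl⟩) | ⟨m, hm, rfl⟩
  · simpa using zero_mem_pword
  · obtain ⟨n, hn, hAn, hBn⟩ := exists_enum_eq_add_period hA hB hab hper hcount hm h1 h2
    exact Or.inl (Or.inr ⟨n, hn, by rw [hAn, hBn]; simp⟩)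
  · obtain ⟨n, hn, hAn, hBn⟩ := exists_enum_eq_add_period hA hB hab hper hcount hm h2 h1
    exact Or.inr ⟨n, hn, by rw [hAn, hBn]; simp⟩

end PositionSet

/-- `x` has a move of the invariant game with move set `ℕ² \ (P - P)` into `P`. -/
def HasLegalMoveInto (P : Set (ℕ × ℕ)) (x : ℕ × ℕ) : Prop :=
  ∃ p ∈ P, p.1 ≤ x.1 ∧ p.2 ≤ x.2 ∧ (x.1 - p.1, x.2 - p.2) ∉ DiffOf P P

section LocalToGlobal

variable {P : Set (ℕ × ℕ)} {ℓ : ℕ}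

lemma swap_mem_diffOf (hsymm : ∀ p ∈ P, p.swap ∈ P) {d : ℕ × ℕ} (hd : d ∈ DiffOf P P) :
    d.swap ∈ DiffOf P P := by
  obtain ⟨a, ha, b, hb, h1, h2, rfl⟩ := hd
  exact ⟨a.swap, hsymm a ha, b.swap, hsymm b hb, h2, h1, rfl⟩

lemma hasLegalMoveInto_of_swap (hsymm : ∀ p ∈ P, p.swap ∈ P) {x : ℕ × ℕ}
    (hx : HasLegalMoveInto P x.swap) : HasLegalMoveInto P x := by
  obtain ⟨p, hp, h1, h2, hd⟩ := hx
  exact ⟨p.swap, hsymm p hp, h2, h1, fun hd' => hd (swap_mem_diffOf hsymm hd')⟩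

lemma hasLegalMoveInto_of_add_period_le (hinj : Set.InjOn Prod.snd P)
    (hrow : ∀ n, ∃ p ∈ P, p.2 = n ∧ p.1 < n + ℓ) {x : ℕ × ℕ} (hx : x.2 + ℓ ≤ x.1) :
    HasLegalMoveInto P x := by
  obtain ⟨p, hp, h2, h1⟩ := hrow x.2
  refine ⟨p, hp, by omega, h2.le, ?_⟩
  rintro ⟨a, ha, b, hb, hba1, hba2, hd⟩
  obtain ⟨hd1, hd2⟩ := Prod.mk.inj hd
  have hab : a = b := hinj ha hb (by omega)
  subst hab
  omega

lemma sub_period_mem_diffOf (hdown : ∀ p ∈ P, ℓ ≤ p.1 → ℓ ≤ p.2 → (p.1 - ℓ, p.2 - ℓ) ∈ P)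
    {d : ℕ × ℕ} (hd : d ∈ DiffOf P P) (h1 : ℓ ≤ d.1) (h2 : ℓ ≤ d.2) :
    (d.1 - ℓ, d.2 - ℓ) ∈ DiffOf P P := by
  obtain ⟨a, ha, b, hb, hba1, hba2, rfl⟩ := hd
  dsimp only at h1 h2
  refine ⟨_, hdown a ha (by omega) (by omega), b, hb, ?_, ?_, ?_⟩
  all_goals dsimp only
  · omega
  · omega
  · congr 1 <;> omega

lemma hasLegalMoveInto_of_sub_period
    (hdown : ∀ p ∈ P, ℓ ≤ p.1 → ℓ ≤ p.2 → (p.1 - ℓ, p.2 - ℓ) ∈ P) {x : ℕ × ℕ}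
    (h1 : ℓ ≤ x.1) (h2 : ℓ ≤ x.2) (hx : HasLegalMoveInto P (x.1 - ℓ, x.2 - ℓ)) :
    HasLegalMoveInto P x := by
  obtain ⟨p, hp, hp1, hp2, hd⟩ := hx
  dsimp only at hp1 hp2 hd
  refine ⟨p, hp, by omega, by omega, fun hd' => hd ?_⟩
  have := sub_period_mem_diffOf hdown hd' (by dsimp only; omega) (by dsimp only; omega)
  dsimp only at this
  rwa [Nat.sub_right_comm x.1, Nat.sub_right_comm x.2] at this

theorem hasLegalMoveInto_of_square (hsymm : ∀ p ∈ P, p.swap ∈ P) (hinj : Set.InjOn Prod.snd P)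
    (hrow : ∀ n, ∃ p ∈ P, p.2 = n ∧ p.1 < n + ℓ)
    (hup : ∀ p ∈ P, p ≠ (0, 0) → (p.1 + ℓ, p.2 + ℓ) ∈ P)
    (hdown : ∀ p ∈ P, ℓ ≤ p.1 → ℓ ≤ p.2 → (p.1 - ℓ, p.2 - ℓ) ∈ P)
    (hsq : ∀ x : ℕ × ℕ, x.1 ≤ 2 * ℓ → x.2 ≤ 2 * ℓ → x ∉ P → HasLegalMoveInto P x)
    (x : ℕ × ℕ) (hx : x ∉ P) : HasLegalMoveInto P x := by
  by_cases hin : x.1 ≤ 2 * ℓ ∧ x.2 ≤ 2 * ℓ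
  · exact hsq x hin.1 hin.2 hx
  by_cases hbelow : x.2 + ℓ ≤ x.1
  · exact hasLegalMoveInto_of_add_period_le hinj hrow hbelow
  by_cases habove : x.1 + ℓ ≤ x.2
  · exact hasLegalMoveInto_of_swap hsymm (hasLegalMoveInto_of_add_period_le hinj hrow habove)
  have hx' : (x.1 - ℓ, x.2 - ℓ) ∉ P := fun hx' => hx <| by
    have := hup _ hx' (by simp only [ne_eq, Prod.mk.injEq]; omega)
    rwa [Nat.sub_add_cancel (by omega), Nat.sub_add_cancel (by omega)] at this
  exact hasLegalMoveInto_of_sub_period hdown (by omega) (by omega)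
    (hasLegalMoveInto_of_square hsymm hinj hrow hup hdown hsq _ hx')
termination_by x.1
decreasing_by omega

end LocalToGlobal

section Game

variable {P : Set (ℕ × ℕ)}

lemma hasLegalMoveInto_of_isPPositions2 {I : Set (ℕ × ℕ)}
    (hP : IsPPositions2 (fun p => I ∩ {m | m.1 ≤ p.1 ∧ m.2 ≤ p.2}) P) {x : ℕ × ℕ} (hx : x ∉ P) :
    HasLegalMoveInto P x := by
  obtain ⟨m, ⟨hmI, hm1, hm2⟩, hxm⟩ := hP.2 x hx
  refine ⟨_, hxm, Nat.sub_le _ _, Nat.sub_le _ _, ?_⟩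
  rw [Nat.sub_sub_self hm1, Nat.sub_sub_self hm2, Prod.mk.eta]
  rintro ⟨a, ha, b, hb, hba1, hba2, rfl⟩
  refine hP.1 a ha _ ⟨hmI, Nat.sub_le _ _, Nat.sub_le _ _⟩ ?_
  rwa [Nat.sub_sub_self hba1, Nat.sub_sub_self hba2]

lemma isPPositions2_compl_diffOf (hmove : ∀ x, x ∉ P → HasLegalMoveInto P x) :
    IsPPositions2 (fun p => (DiffOf P P)ᶜ ∩ {m | m.1 ≤ p.1 ∧ m.2 ≤ p.2}) P := by
  refine ⟨?_, ?_⟩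
  · rintro p hp m ⟨hmD, hm1, hm2⟩ hpm
    refine hmD ⟨p, hp, _, hpm, Nat.sub_le _ _, Nat.sub_le _ _, ?_⟩
    rw [Nat.sub_sub_self hm1, Nat.sub_sub_self hm2]
  · intro x hx
    obtain ⟨p, hp, hp1, hp2, hd⟩ := hmove x hx
    refine ⟨_, ⟨hd, Nat.sub_le _ _, Nat.sub_le _ _⟩, ?_⟩
    rwa [Nat.sub_sub_self hp1, Nat.sub_sub_self hp2]

end Game

/-- For a periodic balanced binary word, `P_w` is 1-invariant iff invariance can
be checked on the square [0,2ℓ]². -/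
theorem periodic_word_one_invariant_iff (w : ℕ → ℕ) (ℓ : ℕ) (hℓ : 1 ≤ ℓ)
    (hbin : ∀ i, 1 ≤ i → w i = 1 ∨ w i = 2)
    (hper : ∀ i, 1 ≤ i → w (i + ℓ) = w i)
    (hcount : ((Finset.Icc 1 ℓ).filter (fun i => w i = 1)).card =
              ((Finset.Icc 1 ℓ).filter (fun i => w i = 2)).card)
    (A B : ℕ → ℕ) (hA : EnumOcc w 1 A) (hB : EnumOcc w 2 B) :
    (∃ I : Set (ℕ × ℕ), (0, 0) ∉ I ∧
        IsPPositions2 (fun p => I ∩ {m | m.1 ≤ p.1 ∧ m.2 ≤ p.2}) (Pword A B)) ↔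
      ∀ x : ℕ × ℕ, x.1 ≤ 2 * ℓ → x.2 ≤ 2 * ℓ → x ∉ Pword A B →
        ∃ p ∈ Pword A B, p.1 ≤ x.1 ∧ p.2 ≤ x.2 ∧
          (x.1 - p.1, x.2 - p.2) ∉ DiffOf (Pword A B) (Pword A B) := by
  refine ⟨fun ⟨I, _, hP⟩ x _ _ hx => hasLegalMoveInto_of_isPPositions2 hP hx, fun hsq => ?_⟩
  have h12 : (1 : ℕ) ≠ 2 := by decide
  have hmove := hasLegalMoveInto_of_square (fun _ => swap_mem_pword)
    (injOn_snd_pword hA hB h12) (exists_mem_pword_snd_eq hℓ hbin hper hcount hA hB)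
    (fun _ => add_period_mem_pword hper hcount hA hB)
    (fun _ => sub_period_mem_pword h12 hper hcount hA hB) hsq
  exact ⟨(DiffOf _ _)ᶜ, fun h => h ⟨_, zero_mem_pword, _, zero_mem_pword, le_rfl, le_rfl, rfl⟩,
    isPPositions2_compl_diffOf hmove⟩
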